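/- arXiv:2306.12717 — 4 statements merged into one kernel-verified Lean document; each statement's English description precedes it below -/
import Mathlib

section
/- For the derivative identity of the Derrida–Retaux generating functions: for all s in the domain of finiteness, (s−1)·s·H_{n+1}'(s) − H_{n+1}(s) = [m(s−1)·H_n'(s) − H_n(s)] · H_n(s)^{m−1}. -/
/-- The sum of `k` i.i.d. draws from `μ` (as a distribution on `ℕ`). -/
noncomputable def iidSum (μ : PMF ℕ) : ℕ → PMF ℕ
  | 0 => PMF.pure 0
  | k + 1 => (iidSum μ k).bind fun a => μ.map fun b => a + b

/-- One Derrida–Retaux step: the law of `(X_1 + ⋯ + X_m − 1)⁺` for i.i.d. `X_i ∼ μ`. -/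
noncomputable def drStep (m : ℕ) (μ : PMF ℕ) : PMF ℕ :=
  (iidSum μ m).map fun k => k - 1

/-- Moment generating function `H(s) = E(s^X)` of a distribution on `ℕ`. -/
noncomputable def pgf (μ : PMF ℕ) (s : ℝ) : ℝ := ∑' k : ℕ, (μ k).toReal * s ^ k

open ENNReal Set Filter Topology

/-- ENNReal-valued generating function. -/
noncomputable def epgf (μ : PMF ℕ) (x : ℝ≥0∞) : ℝ≥0∞ := ∑' k, μ k * x ^ k

lemma epgf_map (μ : PMF ℕ) (f : ℕ → ℕ) (x : ℝ≥0∞) :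
    epgf (μ.map f) x = ∑' a, μ a * x ^ (f a) := by
  unfold epgf
  simp_rw [PMF.map_apply, ← ENNReal.tsum_mul_right]
  rw [ENNReal.tsum_comm]
  congr 1
  ext a
  refine (tsum_eq_single (f a) fun b hb => ?_).trans (by simp)
  rw [if_neg hb, zero_mul]

lemma epgf_bind (p : PMF ℕ) (q : ℕ → PMF ℕ) (x : ℝ≥0∞) :
    epgf (p.bind q) x = ∑' a, p a * epgf (q a) x := by
  unfold epgf
  simp_rw [PMF.bind_apply, ← ENNReal.tsum_mul_right]
  rw [ENNReal.tsum_comm]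
  congr 1
  ext a
  simp_rw [mul_assoc, ENNReal.tsum_mul_left]

lemma epgf_iidSum (μ : PMF ℕ) (k : ℕ) (x : ℝ≥0∞) :
    epgf (iidSum μ k) x = (epgf μ x) ^ k := by
  induction k with
  | zero =>
      simp only [iidSum, epgf, pow_zero]
      refine (tsum_eq_single 0 fun b hb => ?_).trans (by simp)
      simp [PMF.pure_apply, hb]
  | succ k ih =>
      rw [show iidSum μ (k+1) = (iidSum μ k).bind fun a => μ.map fun b => a + b from rfl,
        epgf_bind]
      simp_rw [epgf_map, pow_add]
      calc ∑' a, iidSum μ k a * ∑' b, μ b * (x ^ a * x ^ b)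
          = ∑' a, iidSum μ k a * x ^ a * ∑' b, μ b * x ^ b := by
            congr 1; ext a
            rw [mul_assoc]
            congr 1
            simp_rw [← mul_assoc, mul_comm (μ _) (x ^ a), mul_assoc, ENNReal.tsum_mul_left]
        _ = (epgf μ x) ^ k * epgf μ x ^ 1 := by
            rw [ENNReal.tsum_mul_right, ← ih, pow_one]; rfl

lemma epgf_drStep (m : ℕ) (μ : PMF ℕ) (x : ℝ≥0∞) :
    x * epgf (drStep m μ) x + (iidSum μ m) 0 =
      (iidSum μ m) 0 * x + (epgf μ x) ^ m := by
  rw [drStep, epgf_map, ← ENNReal.tsum_mul_left]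
  have h1 : ∑' a, x * ((iidSum μ m) a * x ^ (a - 1)) =
      (iidSum μ m) 0 * x + ∑' a, (iidSum μ m) (a + 1) * x ^ (a + 1) := by
    rw [tsum_eq_zero_add' ENNReal.summable]
    congr 1
    · simp [mul_comm]
    · congr 1; ext a
      rw [Nat.add_sub_cancel, pow_succ]
      ring
  have h2 : epgf μ x ^ m = (iidSum μ m) 0 + ∑' a, (iidSum μ m) (a + 1) * x ^ (a + 1) := by
    rw [← epgf_iidSum, epgf, tsum_eq_zero_add' ENNReal.summable]
    simp
  rw [h1, h2]
  ring

lemma epgf_eq_ofReal_pgf (μ : PMF ℕ) {s : ℝ} (hs : 0 ≤ s)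
    (h : Summable fun j : ℕ => (μ j).toReal * s ^ j) :
    epgf μ (ENNReal.ofReal s) = ENNReal.ofReal (pgf μ s) := by
  rw [pgf, ENNReal.ofReal_tsum_of_nonneg
    (fun j => mul_nonneg ENNReal.toReal_nonneg (pow_nonneg hs j)) h]
  unfold epgf
  congr 1
  ext j
  rw [ENNReal.ofReal_mul ENNReal.toReal_nonneg, ENNReal.ofReal_toReal (μ.apply_ne_top j),
    ← ENNReal.ofReal_pow hs]

lemma pgf_nonneg (μ : PMF ℕ) {s : ℝ} (hs : 0 ≤ s) : 0 ≤ pgf μ s :=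
  tsum_nonneg fun j => mul_nonneg ENNReal.toReal_nonneg (pow_nonneg hs j)

/-- The real-valued identity `t·H_{n+1}(t) + c = t·c + H_n(t)^m`. -/
lemma real_identity (m : ℕ) (μ : PMF ℕ) {t : ℝ} (ht : 0 ≤ t)
    (h : Summable fun j : ℕ => (μ j).toReal * t ^ j)
    (h' : Summable fun j : ℕ => ((drStep m μ) j).toReal * t ^ j) :
    t * pgf (drStep m μ) t + ((iidSum μ m) 0).toReal =
      t * ((iidSum μ m) 0).toReal + (pgf μ t) ^ m := by
  have key := epgf_drStep m μ (ENNReal.ofReal t)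
  rw [epgf_eq_ofReal_pgf _ ht h', epgf_eq_ofReal_pgf _ ht h] at key
  have h0 : (iidSum μ m) 0 = ENNReal.ofReal (((iidSum μ m) 0).toReal) :=
    (ENNReal.ofReal_toReal ((iidSum μ m).apply_ne_top 0)).symm
  rw [h0, ← ENNReal.ofReal_mul ht, ← ENNReal.ofReal_pow (pgf_nonneg μ ht),
    ← ENNReal.ofReal_add (mul_nonneg ht (pgf_nonneg _ ht)) ENNReal.toReal_nonneg,
    ← ENNReal.ofReal_mul ENNReal.toReal_nonneg,
    ← ENNReal.ofReal_add (mul_nonneg ENNReal.toReal_nonneg ht)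
      (pow_nonneg (pgf_nonneg μ ht) m)] at key
  have hA : (0:ℝ) ≤ t * pgf (drStep m μ) t + ((iidSum μ m) 0).toReal :=
    add_nonneg (mul_nonneg ht (pgf_nonneg _ ht)) ENNReal.toReal_nonneg
  have hB : (0:ℝ) ≤ ((iidSum μ m) 0).toReal * t + (pgf μ t) ^ m :=
    add_nonneg (mul_nonneg ENNReal.toReal_nonneg ht) (pow_nonneg (pgf_nonneg μ ht) m)
  have key2 := (ENNReal.ofReal_eq_ofReal_iff hA hB).mp key
  linarith

/-- The derivative identity of the Derrida–Retaux generating functions: for all `s` in the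
domain of finiteness (where the generating functions are differentiable),
`(s−1)·s·H_{n+1}'(s) − H_{n+1}(s) = [m(s−1)·H_n'(s) − H_n(s)] · H_n(s)^{m−1}`. -/
theorem stmt3 (m : ℕ) (hm : 2 ≤ m) (μ : ℕ → PMF ℕ)
    (hrec : ∀ n, μ (n + 1) = drStep m (μ n)) (n : ℕ) (s : ℝ) (hs : 0 < s)
    (hfin : ∀ k : ℕ, Summable fun j : ℕ => (μ k j).toReal * s ^ j)
    (hdiff : DifferentiableAt ℝ (pgf (μ n)) s)
    (hdiff' : DifferentiableAt ℝ (pgf (μ (n + 1))) s) :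
    (s - 1) * s * deriv (pgf (μ (n + 1))) s - pgf (μ (n + 1)) s =
      (m * (s - 1) * deriv (pgf (μ n)) s - pgf (μ n) s) * (pgf (μ n) s) ^ (m - 1) := by
  set H := pgf (μ n)
  set K := pgf (μ (n + 1))
  set c := ((iidSum (μ n) m) 0).toReal with hc
  -- summability at any 0 ≤ t ≤ s
  have hsum : ∀ k : ℕ, ∀ t : ℝ, 0 ≤ t → t ≤ s →
      Summable fun j : ℕ => (μ k j).toReal * t ^ j := by
    intro k t ht hts
    refine Summable.of_nonneg_of_le
      (fun j => mul_nonneg ENNReal.toReal_nonneg (pow_nonneg ht j))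
      (fun j => mul_le_mul_of_nonneg_left (pow_le_pow_left₀ ht hts j)
        ENNReal.toReal_nonneg) (hfin k)
  -- the functional identity on (0, s]
  have hid : ∀ t ∈ Ioc (0:ℝ) s, t * K t + c = t * c + (H t) ^ m := by
    intro t ht
    have := real_identity m (μ n) ht.1.le (hsum n t ht.1.le ht.2)
      (by rw [← hrec n]; exact hsum (n + 1) t ht.1.le ht.2)
    rw [← hrec n] at this
    exact this
  have hidS : s * K s + c = s * c + (H s) ^ m := hid s ⟨hs, le_refl s⟩
  -- derivatives of F t = t * K t + c and G t = t * c + H t ^ m at s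
  have hF : HasDerivAt (fun t => t * K t + c) (K s + s * deriv K s) s := by
    have := (hasDerivAt_id s).mul hdiff'.hasDerivAt
    simpa [one_mul] using this.add_const c
  have hG : HasDerivAt (fun t => t * c + (H t) ^ m)
      (c + m * (H s) ^ (m - 1) * deriv H s) s := by
    have h1 : HasDerivAt (fun t : ℝ => t * c) c s := by
      simpa using (hasDerivAt_id s).mul_const c
    exact h1.add (hdiff.hasDerivAt.pow m)
  -- the two functions agree on a left neighborhood of s, so derivatives agree
  have hmem : Ioo (0:ℝ) s ∈ 𝓝[<] s := Ioo_mem_nhdsLT_of_mem ⟨hs, le_refl s⟩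
  have hev : (fun t => t * K t + c) =ᶠ[𝓝[<] s] (fun t => t * c + (H t) ^ m) :=
    Filter.eventuallyEq_of_mem hmem fun t ht => hid t ⟨ht.1, ht.2.le⟩
  have hFW : HasDerivWithinAt (fun t => t * K t + c) (K s + s * deriv K s) (Iio s) s :=
    hF.hasDerivWithinAt
  have hGW : HasDerivWithinAt (fun t => t * K t + c)
      (c + m * (H s) ^ (m - 1) * deriv H s) (Iio s) s :=
    hG.hasDerivWithinAt.congr_of_eventuallyEq hev hidS
  have huniq : K s + s * deriv K s = c + m * (H s) ^ (m - 1) * deriv H s := by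
    rw [← hFW.derivWithin (uniqueDiffWithinAt_Iio s),
      ← hGW.derivWithin (uniqueDiffWithinAt_Iio s)]
  have hpow : (H s) ^ m = H s * (H s) ^ (m - 1) := by
    conv_lhs => rw [show m = (m - 1) + 1 by omega]
    rw [pow_succ]; ring
  nlinarith [huniq, hidS, hpow]
end

section
/- For any nonnegative integer-valued random variable X with E(m^X) < ∞, one has δ := E[(1 − (m−1)X)·m^X] ≤ P(X = 0) ≤ 1. -/
/-- For any nonnegative integer-valued random variable `X` (with law `μ`) satisfying
`E(m^X) < ∞`, one has `δ := E[(1 − (m−1)X)·m^X] ≤ P(X = 0) ≤ 1`. -/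
theorem stmt4 (m : ℕ) (hm : 2 ≤ m) (μ : PMF ℕ)
    (hfin : Summable fun k : ℕ => (μ k).toReal * (m : ℝ) ^ k) :
    (∑' k : ℕ, (μ k).toReal * ((1 - ((m : ℝ) - 1) * k) * (m : ℝ) ^ k)) ≤ (μ 0).toReal ∧
      (μ 0).toReal ≤ 1 := by
  constructor
  · set f : ℕ → ℝ := fun k => (μ k).toReal * ((1 - ((m : ℝ) - 1) * k) * (m : ℝ) ^ k) with hf
    by_cases hs : Summable f
    · have hle : ∀ k, f k ≤ (if k = 0 then (μ 0).toReal else 0) := by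
        intro k
        cases k with
        | zero => simp [hf]
        | succ n =>
          simp only [hf, if_neg (Nat.succ_ne_zero n)]
          apply mul_nonpos_of_nonneg_of_nonpos ENNReal.toReal_nonneg
          apply mul_nonpos_of_nonpos_of_nonneg
          · have h1 : (1 : ℝ) ≤ ((m : ℝ) - 1) * (n + 1 : ℕ) := by
              have hm' : (2 : ℝ) ≤ (m : ℝ) := by exact_mod_cast hm
              have h2 : (1 : ℝ) ≤ (m : ℝ) - 1 := by linarith
              have h3 : (1 : ℝ) ≤ ((n : ℝ) + 1) := by have := Nat.cast_nonneg (α := ℝ) n; linarith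
              calc (1 : ℝ) = 1 * 1 := by ring
                _ ≤ ((m : ℝ) - 1) * ((n : ℝ) + 1) := by
                    apply mul_le_mul h2 h3 (by norm_num) (by linarith)
                _ = ((m : ℝ) - 1) * (n + 1 : ℕ) := by push_cast; ring
            linarith
          · positivity
      have hg : Summable (fun k : ℕ => if k = 0 then (μ 0).toReal else 0) :=
        summable_of_ne_finset_zero (s := {0}) (by intro k hk; simp at hk; simp [hk])
      calc ∑' k, f k ≤ ∑' k : ℕ, (if k = 0 then (μ 0).toReal else 0) :=
            Summable.tsum_le_tsum hle hs hg
        _ = (μ 0).toReal := tsum_ite_eq 0 _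
    · rw [tsum_eq_zero_of_not_summable hs]
      exact ENNReal.toReal_nonneg
  · have := PMF.coe_le_one μ 0
    exact ENNReal.toReal_le_of_le_ofReal zero_le_one (by simpa using this)
end

section
/- Suppose there exist t > m, θ ∈ (0,1), and an integer M ≥ 0 such that (m/t)·[E(t^{X_M})]^{m−1} ≤ θ. Then for all n ≥ M, E(t^{X_n}) ≤ 1 + (t − m)·θ^{n−M}. -/
open ENNReal

noncomputable def egf (μ : PMF ℕ) (s : ℝ≥0∞) : ℝ≥0∞ := ∑' k : ℕ, μ k * s ^ k

lemma egf_pure (n : ℕ) (s : ℝ≥0∞) : egf (PMF.pure n) s = s ^ n := by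
  unfold egf
  rw [tsum_eq_single n]
  · simp [PMF.pure_apply]
  · intro b hb; simp [PMF.pure_apply, hb]

lemma egf_bind (μ : PMF ℕ) (f : ℕ → PMF ℕ) (s : ℝ≥0∞) :
    egf (μ.bind f) s = ∑' a : ℕ, μ a * egf (f a) s := by
  unfold egf
  simp only [PMF.bind_apply]
  have : ∀ k : ℕ, (∑' a, μ a * f a k) * s ^ k = ∑' a, μ a * (f a k * s ^ k) := by
    intro k; rw [← ENNReal.tsum_mul_right]; congr 1; ext a; ring
  simp only [this]
  rw [ENNReal.tsum_comm]
  congr 1; ext a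
  rw [ENNReal.tsum_mul_left]

lemma egf_map (μ : PMF ℕ) (f : ℕ → ℕ) (s : ℝ≥0∞) :
    egf (μ.map f) s = ∑' a : ℕ, μ a * s ^ (f a) := by
  rw [PMF.map, egf_bind]
  simp only [Function.comp, egf_pure]

lemma egf_iidSum (μ : PMF ℕ) (s : ℝ≥0∞) (k : ℕ) :
    egf (iidSum μ k) s = (egf μ s) ^ k := by
  induction k with
  | zero =>
    simp only [iidSum, egf, pow_zero]
    rw [tsum_eq_single 0] <;> simp [PMF.pure_apply]
    intro b hb; simp [hb]
  | succ k ih =>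
    rw [iidSum, egf_bind]
    have : ∀ a : ℕ, egf ((μ.map fun b => a + b)) s = s ^ a * egf μ s := by
      intro a
      rw [egf_map]
      unfold egf
      rw [← ENNReal.tsum_mul_left]
      congr 1; ext b; rw [pow_add]; ring
    simp only [this]
    calc (∑' a, iidSum μ k a * (s ^ a * egf μ s))
        = (∑' a, iidSum μ k a * s ^ a) * egf μ s := by
          rw [← ENNReal.tsum_mul_right]; congr 1; ext a; ring
      _ = (egf μ s) ^ k * egf μ s := by rw [← ih]; rfl
      _ = (egf μ s) ^ (k + 1) := by ring

lemma egf_drStep_le (m : ℕ) (μ : PMF ℕ) (s : ℝ≥0∞) (hs : 1 ≤ s) :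
    s * egf (drStep m μ) s ≤ (egf μ s) ^ m + (s - 1) := by
  rw [drStep, egf_map, ← egf_iidSum μ s m]
  set ν := iidSum μ m
  rw [← ENNReal.tsum_mul_left]
  have hle : ∀ a : ℕ, s * (ν a * s ^ (a - 1)) ≤ ν a * s ^ a + (if a = 0 then s - 1 else 0) := by
    intro a
    match a with
    | 0 =>
      have h1 : ν 0 ≤ 1 := PMF.coe_le_one ν 0
      have h2 : s * (ν 0 * s ^ (0 - 1 : ℕ)) ≤ ν 0 + (s - 1) := by
        simp only [Nat.zero_sub, pow_zero, mul_one]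
        calc s * ν 0 = (1 + (s - 1)) * ν 0 := by rw [add_tsub_cancel_of_le hs]
          _ = ν 0 + (s - 1) * ν 0 := by ring
          _ ≤ ν 0 + (s - 1) * 1 := by gcongr
          _ = ν 0 + (s - 1) := by rw [mul_one]
      simpa using h2
    | a + 1 =>
      simp only [Nat.add_sub_cancel, if_neg (Nat.succ_ne_zero a), add_zero]
      rw [pow_succ]
      ring_nf
      exact le_refl _
  calc (∑' a, s * (ν a * s ^ (a - 1)))
      ≤ ∑' a, (ν a * s ^ a + (if a = 0 then s - 1 else 0)) := ENNReal.tsum_le_tsum hle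
    _ = (∑' a, ν a * s ^ a) + ∑' a : ℕ, (if a = 0 then s - 1 else 0) := ENNReal.tsum_add
    _ = egf ν s + (s - 1) := by
        congr 1
        rw [tsum_eq_single 0]
        · simp
        · intro b hb; simp [hb]

lemma one_le_egf (μ : PMF ℕ) (s : ℝ≥0∞) (hs : 1 ≤ s) : 1 ≤ egf μ s := by
  calc (1 : ℝ≥0∞) = ∑' k, μ k := μ.tsum_coe.symm
    _ ≤ egf μ s := by
        apply ENNReal.tsum_le_tsum
        intro k
        calc μ k = μ k * 1 := (mul_one _).symm
          _ ≤ μ k * s ^ k := by gcongr; exact one_le_pow_of_one_le' hs k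

lemma pgf_eq_toReal (μ : PMF ℕ) (t : ℝ) (ht : 0 ≤ t) :
    pgf μ t = (egf μ (ENNReal.ofReal t)).toReal := by
  unfold pgf egf
  rw [ENNReal.tsum_toReal_eq]
  · congr 1; ext k
    rw [ENNReal.toReal_mul, ENNReal.toReal_pow, ENNReal.toReal_ofReal ht]
  · intro k
    exact ENNReal.mul_ne_top (PMF.apply_ne_top μ k)
      (pow_ne_top ENNReal.ofReal_ne_top)

lemma pow_sub_one_le_aux (x : ℝ) (hx : 1 ≤ x) (m : ℕ) :
    x ^ m - 1 ≤ m * x ^ (m - 1) * (x - 1) := by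
  rw [← geom_sum_mul]
  apply mul_le_mul_of_nonneg_right _ (by linarith)
  calc (∑ i ∈ Finset.range m, x ^ i) ≤ ∑ _i ∈ Finset.range m, x ^ (m - 1) := by
        apply Finset.sum_le_sum
        intro i hi
        exact pow_le_pow_right₀ hx (by have := Finset.mem_range.mp hi; omega)
    _ = m * x ^ (m - 1) := by
        rw [Finset.sum_const, Finset.card_range, nsmul_eq_mul]

/-- Suppose there exist `t > m`, `θ ∈ (0,1)`, and an integer `M ≥ 0` such that
`(m/t)·[E(t^{X_M})]^{m−1} ≤ θ`.  Then for all `n ≥ M`,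
`E(t^{X_n}) ≤ 1 + (t − m)·θ^{n−M}`. -/
theorem stmt8 (m : ℕ) (hm : 2 ≤ m) (μ : ℕ → PMF ℕ)
    (hrec : ∀ n, μ (n + 1) = drStep m (μ n))
    (t θ : ℝ) (ht : (m : ℝ) < t) (hθ : θ ∈ Set.Ioo (0 : ℝ) 1) (M : ℕ)
    (hfin : Summable fun k : ℕ => (μ M k).toReal * t ^ k)
    (hM : ((m : ℝ) / t) * (pgf (μ M) t) ^ (m - 1) ≤ θ) :
    ∀ n : ℕ, M ≤ n → pgf (μ n) t ≤ 1 + (t - m) * θ ^ (n - M) := by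
  obtain ⟨hθ0, hθ1⟩ := hθ
  have hm2 : (2 : ℝ) ≤ m := by exact_mod_cast hm
  have ht1 : (1 : ℝ) ≤ t := by linarith
  have ht0 : (0 : ℝ) < t := by linarith
  set s : ℝ≥0∞ := ENNReal.ofReal t with hs
  have hs1 : (1 : ℝ≥0∞) ≤ s := by rw [hs]; exact ENNReal.one_le_ofReal.mpr ht1
  have hsne : s ≠ ∞ := ENNReal.ofReal_ne_top
  have hs0 : s ≠ 0 := by
    intro h; rw [h] at hs1; exact (by simp : ¬ ((1:ℝ≥0∞) ≤ 0)) hs1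
  have hts : s.toReal = t := by rw [hs]; exact ENNReal.toReal_ofReal ht0.le
  have hpgf : ∀ n, pgf (μ n) t = (egf (μ n) s).toReal := fun n => pgf_eq_toReal _ t ht0.le
  have hfinM : egf (μ M) s ≠ ∞ := by
    have h1 : egf (μ M) s = ∑' k : ℕ, ENNReal.ofReal ((μ M k).toReal * t ^ k) := by
      unfold egf; rw [hs]; congr 1; ext k
      rw [ENNReal.ofReal_mul ENNReal.toReal_nonneg,
        ENNReal.ofReal_toReal (PMF.apply_ne_top _ _), ENNReal.ofReal_pow ht0.le]
    rw [h1, ← ENNReal.ofReal_tsum_of_nonneg (fun k => by positivity) hfin]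
    exact ENNReal.ofReal_ne_top
  have hone : ∀ n, egf (μ n) s ≠ ∞ → 1 ≤ pgf (μ n) t := by
    intro n h
    rw [hpgf n]
    have := ENNReal.toReal_mono h (one_le_egf (μ n) s hs1)
    simpa using this
  have hstep : ∀ n, egf (μ n) s ≠ ∞ →
      egf (μ (n + 1)) s ≠ ∞ ∧ t * pgf (μ (n + 1)) t ≤ (pgf (μ n) t) ^ m + (t - 1) := by
    intro n hfn
    have hkey : s * egf (μ (n + 1)) s ≤ (egf (μ n) s) ^ m + (s - 1) := by
      rw [hrec n]; exact egf_drStep_le m (μ n) s hs1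
    have hrhs : (egf (μ n) s) ^ m + (s - 1) ≠ ∞ :=
      ENNReal.add_ne_top.mpr ⟨ENNReal.pow_ne_top hfn, ENNReal.sub_ne_top hsne⟩
    have hfn1 : egf (μ (n + 1)) s ≠ ∞ := by
      intro h
      rw [h, ENNReal.mul_top hs0] at hkey
      exact hrhs (top_le_iff.mp hkey)
    refine ⟨hfn1, ?_⟩
    have h2 := ENNReal.toReal_mono hrhs hkey
    rw [ENNReal.toReal_mul, ENNReal.toReal_add (ENNReal.pow_ne_top hfn)
        (ENNReal.sub_ne_top hsne), ENNReal.toReal_pow,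
      ENNReal.toReal_sub_of_le hs1 hsne, ENNReal.toReal_one, hts] at h2
    rw [hpgf n, hpgf (n + 1)]
    exact h2
  -- rephrase hM
  rw [div_mul_eq_mul_div, div_le_iff₀ ht0] at hM
  -- base bound
  have hHM1 : 1 ≤ pgf (μ M) t := hone M hfinM
  have hbase : pgf (μ M) t ≤ 1 + (t - m) := by
    have hp : pgf (μ M) t ≤ (pgf (μ M) t) ^ (m - 1) :=
      le_self_pow₀ hHM1 (by omega)
    have h3 : (m : ℝ) * pgf (μ M) t ≤ t := by nlinarith
    nlinarith [mul_nonneg (by linarith : (0:ℝ) ≤ (m:ℝ) - 1) (by linarith : (0:ℝ) ≤ t - m)]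
  have main : ∀ k : ℕ, egf (μ (M + k)) s ≠ ∞ ∧ pgf (μ (M + k)) t ≤ pgf (μ M) t ∧
      pgf (μ (M + k)) t ≤ 1 + (t - m) * θ ^ k := by
    intro k
    induction k with
    | zero => exact ⟨hfinM, le_refl _, by simpa using hbase⟩
    | succ k ih =>
      obtain ⟨hfn, hle, hbd⟩ := ih
      obtain ⟨hfn1, hineq⟩ := hstep (M + k) hfn
      have h1 : 1 ≤ pgf (μ (M + k)) t := hone _ hfn
      have h1' : 1 ≤ pgf (μ (M + k + 1)) t := hone _ hfn1
      set H := pgf (μ (M + k)) t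
      set H' := pgf (μ (M + k + 1)) t
      have hpoly := pow_sub_one_le_aux H h1 m
      have hmono : H ^ (m - 1) ≤ (pgf (μ M) t) ^ (m - 1) :=
        pow_le_pow_left₀ (by linarith) hle _
      have hcontr : H' - 1 ≤ θ * (H - 1) := by
        have hA : (m : ℝ) * H ^ (m - 1) * (H - 1) ≤ t * θ * (H - 1) := by
          apply mul_le_mul_of_nonneg_right _ (by linarith)
          calc (m : ℝ) * H ^ (m - 1) ≤ m * (pgf (μ M) t) ^ (m - 1) := by
                apply mul_le_mul_of_nonneg_left hmono (by positivity)
            _ ≤ θ * t := hM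
            _ = t * θ := mul_comm _ _
        have h5 : t * (H' - 1) ≤ t * (θ * (H - 1)) := by nlinarith
        exact le_of_mul_le_mul_left h5 ht0
      have hθn : (0:ℝ) ≤ θ ^ k := by positivity
      refine ⟨hfn1, ?_, ?_⟩
      · show H' ≤ pgf (μ M) t
        nlinarith [mul_nonneg (by linarith : (0:ℝ) ≤ 1 - θ) (by linarith : (0:ℝ) ≤ H - 1)]
      · show H' ≤ 1 + (t - m) * θ ^ (k + 1)
        have h6 : θ * (H - 1) ≤ θ * ((t - m) * θ ^ k) := by
          apply mul_le_mul_of_nonneg_left (by linarith) hθ0.le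
        calc H' ≤ 1 + θ * (H - 1) := by linarith
          _ ≤ 1 + θ * ((t - m) * θ ^ k) := by linarith
          _ = 1 + (t - m) * θ ^ (k + 1) := by ring
  intro n hn
  obtain ⟨k, rfl⟩ : ∃ k, n = M + k := ⟨n - M, by omega⟩
  have h7 := (main k).2.2
  simpa [Nat.add_sub_cancel_left] using h7
end

section
/- If there exists a constant C > 0 such that E(X_n) ≤ e^{−Cn} for all sufficiently large n, and P(X_0 ≥ k) = p·P(X_0^* ≥ k) for all k ≥ 1 with some p > 0, then E(s^{X_0^*}) < ∞ for all s ∈ (0, m·e^C). -/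
open scoped ENNReal

namespace DR11

lemma tsum_bind (μ : PMF ℕ) (κ : ℕ → PMF ℕ) (g : ℕ → ℝ≥0∞) :
    ∑' k, (μ.bind κ) k * g k = ∑' a, μ a * ∑' k, κ a k * g k := by
  simp only [PMF.bind_apply]
  calc ∑' k, (∑' a, μ a * κ a k) * g k
      = ∑' k, ∑' a, μ a * κ a k * g k := by
        refine tsum_congr fun k => ?_
        rw [← ENNReal.tsum_mul_right]
    _ = ∑' a, ∑' k, μ a * κ a k * g k := ENNReal.tsum_comm
    _ = ∑' a, μ a * ∑' k, κ a k * g k := by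
        refine tsum_congr fun a => ?_
        rw [← ENNReal.tsum_mul_left]
        exact tsum_congr fun k => (mul_assoc _ _ _)

lemma tsum_pure (x : ℕ) (g : ℕ → ℝ≥0∞) :
    ∑' k, (PMF.pure x : PMF ℕ) k * g k = g x := by
  rw [tsum_eq_single x]
  · simp [PMF.pure_apply]
  · intro b hb; simp [PMF.pure_apply, hb]

lemma tsum_map (μ : PMF ℕ) (f : ℕ → ℕ) (g : ℕ → ℝ≥0∞) :
    ∑' k, (μ.map f) k * g k = ∑' a, μ a * g (f a) := by
  rw [PMF.map, tsum_bind]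
  exact tsum_congr fun a => by rw [Function.comp_apply, tsum_pure]

/-- truncated expectation -/
noncomputable def e (μ : PMF ℕ) (j : ℕ) : ℝ≥0∞ := ∑' k, μ k * ((k - j : ℕ) : ℝ≥0∞)

lemma le_iidSum (μ : PMF ℕ) (c : ℕ) : ∀ n : ℕ,
    (n : ℝ≥0∞) * e μ c ≤ ∑' k, (iidSum μ n) k * ((k - c : ℕ) : ℝ≥0∞)
  | 0 => by simp
  | n + 1 => by
    rw [iidSum, tsum_bind]
    have h1 : ∀ a : ℕ, ((a - c : ℕ) : ℝ≥0∞) + e μ c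
        ≤ ∑' k, (μ.map fun b => a + b) k * ((k - c : ℕ) : ℝ≥0∞) := by
      intro a
      rw [tsum_map]
      have heq : ((a - c : ℕ) : ℝ≥0∞) + e μ c
          = ∑' b, μ b * (((a - c : ℕ) : ℝ≥0∞) + ((b - c : ℕ) : ℝ≥0∞)) := by
        rw [show (fun b => μ b * (((a - c : ℕ) : ℝ≥0∞) + ((b - c : ℕ) : ℝ≥0∞)))
            = fun b => μ b * ((a - c : ℕ) : ℝ≥0∞) + μ b * ((b - c : ℕ) : ℝ≥0∞) from
            funext fun b => mul_add _ _ _, ENNReal.tsum_add,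
          ENNReal.tsum_mul_right, PMF.tsum_coe, one_mul]
        rfl
      rw [heq]
      refine ENNReal.tsum_le_tsum fun b => mul_le_mul_right ?_ _
      have : (a - c) + (b - c) ≤ a + b - c := by omega
      calc ((a - c : ℕ) : ℝ≥0∞) + ((b - c : ℕ) : ℝ≥0∞)
          = (((a - c) + (b - c) : ℕ) : ℝ≥0∞) := by push_cast; ring
        _ ≤ ((a + b - c : ℕ) : ℝ≥0∞) := by exact_mod_cast this
    calc ((n + 1 : ℕ) : ℝ≥0∞) * e μ c
        = (n : ℝ≥0∞) * e μ c + e μ c := by push_cast; ring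
      _ ≤ (∑' k, (iidSum μ n) k * ((k - c : ℕ) : ℝ≥0∞)) + e μ c :=
          add_le_add_left (le_iidSum μ c n) _
      _ = ∑' a, (iidSum μ n) a * (((a - c : ℕ) : ℝ≥0∞) + e μ c) := by
          rw [show (fun a => (iidSum μ n) a * (((a - c : ℕ) : ℝ≥0∞) + e μ c))
              = fun a => (iidSum μ n) a * ((a - c : ℕ) : ℝ≥0∞) + (iidSum μ n) a * e μ c from
              funext fun a => mul_add _ _ _, ENNReal.tsum_add,
            ENNReal.tsum_mul_right, PMF.tsum_coe, one_mul]
      _ ≤ _ := ENNReal.tsum_le_tsum fun a => mul_le_mul_right (h1 a) _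

lemma le_drStep (m : ℕ) (μ : PMF ℕ) (j : ℕ) :
    (m : ℝ≥0∞) * e μ (j + 1) ≤ e (drStep m μ) j := by
  calc (m : ℝ≥0∞) * e μ (j + 1)
      ≤ ∑' k, (iidSum μ m) k * ((k - (j + 1) : ℕ) : ℝ≥0∞) := le_iidSum μ (j + 1) m
    _ = ∑' k, (iidSum μ m) k * ((k - 1 - j : ℕ) : ℝ≥0∞) :=
        tsum_congr fun a => by congr 2; omega
    _ = e (drStep m μ) j := by rw [drStep, e, tsum_map]

lemma tail_le_e (μ : PMF ℕ) (n : ℕ) :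
    μ.toMeasure {x | n + 1 ≤ x} ≤ e μ n := by
  rw [PMF.toMeasure_apply _ (by measurability)]
  refine ENNReal.tsum_le_tsum fun k => ?_
  simp only [Set.indicator_apply, Set.mem_setOf_eq]
  split_ifs with h
  · have h1 : (1 : ℝ≥0∞) ≤ ((k - n : ℕ) : ℝ≥0∞) := by
      have : 1 ≤ k - n := by omega
      exact_mod_cast this
    calc μ k = μ k * 1 := (mul_one _).symm
      _ ≤ _ := mul_le_mul_right h1 _
  · exact zero_le

lemma apply_le_tail (ν : PMF ℕ) (k : ℕ) : ν k ≤ ν.toMeasure {x | k ≤ x} := by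
  rw [← PMF.toMeasure_apply_singleton ν k (measurableSet_singleton k)]
  exact MeasureTheory.measure_mono (fun x hx => by simp only [Set.mem_singleton_iff] at hx; simp [hx])

end DR11

/-- If there exists a constant `C > 0` such that `E(X_n) ≤ e^{−Cn}` for all sufficiently
large `n`, and `P(X_0 ≥ k) = p·P(X_0^* ≥ k)` for all `k ≥ 1` with some `p > 0`, then
`E(s^{X_0^*}) < ∞` for all `s ∈ (0, m·e^C)`.  Here `ν` is the law of `X_0^*` (supported
on `{1, 2, …}`) and `μ 0` is the law of `X_0`. -/
theorem stmt11 (m : ℕ) (hm : 2 ≤ m) (μ : ℕ → PMF ℕ) (ν : PMF ℕ) (hν : ν 0 = 0)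
    (p : ℝ) (hp0 : 0 < p) (hp1 : p < 1)
    (hrec : ∀ n, μ (n + 1) = drStep m (μ n))
    (htail : ∀ k : ℕ, 1 ≤ k →
      (μ 0).toMeasure {x | k ≤ x} = ENNReal.ofReal p * ν.toMeasure {x | k ≤ x})
    (C : ℝ) (hC : 0 < C)
    (hdecay : ∀ᶠ n in Filter.atTop,
      (∑' k : ℕ, μ n k * k) ≤ ENNReal.ofReal (Real.exp (-C * n))) :
    ∀ s : ℝ, 0 < s → s < m * Real.exp C →
      (∑' k : ℕ, ν k * ENNReal.ofReal s ^ k) < ⊤ := by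
  intro s hs0 hs
  obtain ⟨N, hN⟩ := Filter.eventually_atTop.mp hdecay
  have hm0 : (m : ℝ≥0∞) ≠ 0 := by
    simp only [ne_eq, Nat.cast_eq_zero]; omega
  have hmtop : (m : ℝ≥0∞) ≠ ⊤ := ENNReal.natCast_ne_top m
  -- iterate the one-step inequality
  have key : ∀ n j : ℕ, (m : ℝ≥0∞) ^ n * DR11.e (μ 0) (n + j) ≤ DR11.e (μ n) j := by
    intro n
    induction n with
    | zero => intro j; simpa using le_rfl
    | succ n ih =>
      intro j
      rw [hrec n]
      have hidx : n + 1 + j = n + (j + 1) := by omega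
      calc (m : ℝ≥0∞) ^ (n + 1) * DR11.e (μ 0) (n + 1 + j)
          = (m : ℝ≥0∞) * ((m : ℝ≥0∞) ^ n * DR11.e (μ 0) (n + (j + 1))) := by
            rw [hidx, pow_succ]; ring
        _ ≤ (m : ℝ≥0∞) * DR11.e (μ n) (j + 1) := mul_le_mul_right (ih (j + 1)) _
        _ ≤ DR11.e (drStep m (μ n)) j := DR11.le_drStep m (μ n) j
  -- expected value of μ n is e (μ n) 0
  have he0 : ∀ n : ℕ, DR11.e (μ n) 0 = ∑' k : ℕ, μ n k * k := by
    intro n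
    exact tsum_congr fun k => by rw [Nat.sub_zero]
  -- tail bound on ν
  have hpne : ENNReal.ofReal p ≠ 0 := by
    simp [ENNReal.ofReal_eq_zero, not_le, hp0]
  have hptop : ENNReal.ofReal p ≠ ⊤ := ENNReal.ofReal_ne_top
  have hνtail : ∀ n : ℕ, N ≤ n →
      ENNReal.ofReal p * ν (n + 1)
        ≤ ((m : ℝ≥0∞)⁻¹) ^ n * ENNReal.ofReal (Real.exp (-C * n)) := by
    intro n hn
    have h1 : (m : ℝ≥0∞) ^ n * DR11.e (μ 0) n ≤ ENNReal.ofReal (Real.exp (-C * n)) := by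
      have := key n 0
      rw [Nat.add_zero] at this
      exact this.trans (by rw [he0 n]; exact hN n hn)
    have h2 : DR11.e (μ 0) n
        ≤ ((m : ℝ≥0∞)⁻¹) ^ n * ENNReal.ofReal (Real.exp (-C * n)) := by
      have hcancel : ((m : ℝ≥0∞)⁻¹) ^ n * (m : ℝ≥0∞) ^ n = 1 := by
        rw [← mul_pow, ENNReal.inv_mul_cancel hm0 hmtop, one_pow]
      calc DR11.e (μ 0) n
          = ((m : ℝ≥0∞)⁻¹) ^ n * ((m : ℝ≥0∞) ^ n * DR11.e (μ 0) n) := by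
            rw [← mul_assoc, hcancel, one_mul]
        _ ≤ _ := mul_le_mul_right h1 _
    calc ENNReal.ofReal p * ν (n + 1)
        ≤ ENNReal.ofReal p * ν.toMeasure {x | n + 1 ≤ x} :=
          mul_le_mul_right (DR11.apply_le_tail ν (n + 1)) _
      _ = (μ 0).toMeasure {x | n + 1 ≤ x} := (htail (n + 1) (by omega)).symm
      _ ≤ DR11.e (μ 0) n := DR11.tail_le_e (μ 0) n
      _ ≤ _ := h2
  -- the geometric ratio
  set q : ℝ≥0∞ := ENNReal.ofReal (s * Real.exp (-C)) * (m : ℝ≥0∞)⁻¹ with hq_def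
  have hq1 : q < 1 := by
    have hreal : s * Real.exp (-C) < m := by
      have h1 : s * Real.exp (-C) < (m * Real.exp C) * Real.exp (-C) := by
        apply mul_lt_mul_of_pos_right hs (Real.exp_pos _)
      have h2 : (m * Real.exp C) * Real.exp (-C) = m := by
        rw [mul_assoc, ← Real.exp_add]; simp
      linarith [h1, h2.le]
    have hofr : ENNReal.ofReal (s * Real.exp (-C)) < (m : ℝ≥0∞) := by
      rw [show ((m : ℝ≥0∞)) = ENNReal.ofReal (m : ℝ) from (ENNReal.ofReal_natCast m).symm]
      have hmpos : (0 : ℝ) < m := by exact_mod_cast (by omega : 0 < m)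
      exact (ENNReal.ofReal_lt_ofReal_iff hmpos).mpr hreal
    calc q < (m : ℝ≥0∞) * (m : ℝ≥0∞)⁻¹ :=
          ENNReal.mul_lt_mul_left (by simpa using hmtop) (by simpa using hm0) hofr
      _ = 1 := ENNReal.mul_inv_cancel hm0 hmtop
  have hqtop : q ≠ ⊤ := hq1.ne_top
  -- per-term bound for the tail
  have hterm : ∀ n : ℕ, N ≤ n →
      ν (n + 1) * ENNReal.ofReal s ^ (n + 1)
        ≤ (ENNReal.ofReal p)⁻¹ * ENNReal.ofReal s * q ^ n := by
    intro n hn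
    have hb := hνtail n hn
    have hν1 : ν (n + 1)
        ≤ (ENNReal.ofReal p)⁻¹ * (((m : ℝ≥0∞)⁻¹) ^ n * ENNReal.ofReal (Real.exp (-C * n))) := by
      calc ν (n + 1)
          = (ENNReal.ofReal p)⁻¹ * (ENNReal.ofReal p * ν (n + 1)) := by
            rw [← mul_assoc, ENNReal.inv_mul_cancel hpne hptop, one_mul]
        _ ≤ _ := mul_le_mul_right hb _
    have hexp : ENNReal.ofReal (Real.exp (-C * n)) = ENNReal.ofReal (Real.exp (-C)) ^ n := by
      rw [show (-C * n : ℝ) = n * (-C) by ring, Real.exp_nat_mul,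
        ENNReal.ofReal_pow (Real.exp_pos _).le]
    have hqn : q ^ n = ENNReal.ofReal s ^ n * (ENNReal.ofReal (Real.exp (-C)) ^ n
        * ((m : ℝ≥0∞)⁻¹) ^ n) := by
      rw [hq_def, ENNReal.ofReal_mul hs0.le, mul_pow, mul_pow, mul_assoc]
    calc ν (n + 1) * ENNReal.ofReal s ^ (n + 1)
        ≤ ((ENNReal.ofReal p)⁻¹ * (((m : ℝ≥0∞)⁻¹) ^ n * ENNReal.ofReal (Real.exp (-C * n))))
            * ENNReal.ofReal s ^ (n + 1) := mul_le_mul_left hν1 _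
      _ = (ENNReal.ofReal p)⁻¹ * ENNReal.ofReal s * q ^ n := by
          rw [hexp, hqn, pow_succ]; ring
  -- split the sum
  have hsplit : (∑' k : ℕ, ν k * ENNReal.ofReal s ^ k)
      = (∑ k ∈ Finset.range (N + 1), ν k * ENNReal.ofReal s ^ k)
        + ∑' n : ℕ, ν (n + (N + 1)) * ENNReal.ofReal s ^ (n + (N + 1)) :=
    (Summable.sum_add_tsum_nat_add' (f := fun k => ν k * ENNReal.ofReal s ^ k) ENNReal.summable).symm
  rw [hsplit]
  have hfin1 : (∑ k ∈ Finset.range (N + 1), ν k * ENNReal.ofReal s ^ k) < ⊤ := by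
    refine ENNReal.sum_lt_top.mpr fun k _ => ?_
    exact ENNReal.mul_lt_top (lt_of_le_of_lt (PMF.coe_le_one ν k) ENNReal.one_lt_top)
      (ENNReal.pow_lt_top ENNReal.ofReal_lt_top)
  have hfin2 : (∑' n : ℕ, ν (n + (N + 1)) * ENNReal.ofReal s ^ (n + (N + 1))) < ⊤ := by
    have hbound : ∀ n : ℕ, ν (n + (N + 1)) * ENNReal.ofReal s ^ (n + (N + 1))
        ≤ ((ENNReal.ofReal p)⁻¹ * ENNReal.ofReal s * q ^ N) * q ^ n := by
      intro n
      have h := hterm (n + N) (by omega)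
      have hidx : n + N + 1 = n + (N + 1) := by omega
      rw [hidx] at h
      calc ν (n + (N + 1)) * ENNReal.ofReal s ^ (n + (N + 1))
          ≤ (ENNReal.ofReal p)⁻¹ * ENNReal.ofReal s * q ^ (n + N) := h
        _ = ((ENNReal.ofReal p)⁻¹ * ENNReal.ofReal s * q ^ N) * q ^ n := by
            rw [pow_add]; ring
    calc (∑' n : ℕ, ν (n + (N + 1)) * ENNReal.ofReal s ^ (n + (N + 1)))
        ≤ ∑' n : ℕ, ((ENNReal.ofReal p)⁻¹ * ENNReal.ofReal s * q ^ N) * q ^ n :=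
          ENNReal.tsum_le_tsum hbound
      _ = ((ENNReal.ofReal p)⁻¹ * ENNReal.ofReal s * q ^ N) * (1 - q)⁻¹ := by
          rw [ENNReal.tsum_mul_left, ENNReal.tsum_geometric]
      _ < ⊤ := by
          refine ENNReal.mul_lt_top (ENNReal.mul_lt_top (ENNReal.mul_lt_top ?_ ?_) ?_) ?_
          · exact ENNReal.inv_lt_top.mpr (by simpa [pos_iff_ne_zero] using hpne)
          · exact ENNReal.ofReal_lt_top
          · exact ENNReal.pow_lt_top hqtop.lt_top
          · exact ENNReal.inv_lt_top.mpr (tsub_pos_of_lt hq1)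
  exact ENNReal.add_lt_top.mpr ⟨hfin1, hfin2⟩
end
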